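/- Let A be an integer matrix whose kernel lattice L is positive, and let u ∈ M(A) (the universal Markov basis). If u^+ and u^- are vertices of two disjoint Markov polytopes P_1 and P_2 (the convex hulls of the connected components of G_u containing u^+ and u^- respectively), then there exists a linear functional c ∈ R^n, with c·v = 0 for all v in the segment [u^+, u^-] and c·v > 0 for all other points v of the polytope P[u] = conv(F_u); hence [u^+, u^-] is an edge of P[u]. -/

import Mathlib

open Matrix

/-- Componentwise positive part of an integer vector. -/
def vpos {n : ℕ} (u : Fin n → ℤ) : Fin n → ℤ := fun i => max (u i) 0
/-- Componentwise negative part of an integer vector. -/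
def vneg {n : ℕ} (u : Fin n → ℤ) : Fin n → ℤ := fun i => max (-u i) 0

/-- Real realization of an integer vector. -/
def toR {n : ℕ} (u : Fin n → ℤ) : Fin n → ℝ := fun i => (u i : ℝ)

/-- The fiber of `u` with respect to the kernel lattice of `A`. -/
def fiber {m n : ℕ} (A : Matrix (Fin m) (Fin n) ℤ) (u : Fin n → ℤ) : Set (Fin n → ℤ) :=
  {t | (∀ i, 0 ≤ t i) ∧ A.mulVec (vpos u - t) = 0}

/-- The edge relation of the fiber graph `G_u`. -/
def fiberEdge {m n : ℕ} (A : Matrix (Fin m) (Fin n) ℤ) (u : Fin n → ℤ)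
    (w₁ w₂ : Fin n → ℤ) : Prop :=
  w₁ ∈ fiber A u ∧ w₂ ∈ fiber A u ∧ ∃ i, w₁ i ≠ 0 ∧ w₂ i ≠ 0

/-- Connectedness in the fiber graph `G_u`. -/
def sameComponent {m n : ℕ} (A : Matrix (Fin m) (Fin n) ℤ) (u : Fin n → ℤ)
    (w₁ w₂ : Fin n → ℤ) : Prop :=
  Relation.ReflTransGen (fiberEdge A u) w₁ w₂

/-- `x` is a vertex of the polytope spanned by the (real images of the) set `S`. -/
def IsVertexOf {n : ℕ} (S : Set (Fin n → ℝ)) (x : Fin n → ℝ) : Prop :=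
  x ∈ S ∧ ∃ c : Fin n → ℝ, ∀ y ∈ convexHull ℝ S, y ≠ x → c ⬝ᵥ x < c ⬝ᵥ y

/-!
On the fiber `A t = A u⁺`, so a vector `r` in the row space of `A` has `r ⬝ᵥ t = 1` for every
`t ∈ F_u`; subtracting a multiple of `r` shifts the vertex functionals of `P₁` and `P₂` so that they
vanish at `u⁺` and `u⁻` without changing their sign pattern. A fiber point sharing a nonzero
coordinate with `u⁺` is adjacent to it, so the component of `u⁺` avoids `supp u⁻`, the component
of `u⁻` avoids `supp u⁺`, and every other point of `F_u` avoids both supports and, being nonzero,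
has a coordinate outside them. Using the shifted functionals on `supp u⁺` and `supp u⁻` and a
large weight elsewhere (`F_u` is finite by Dickson's lemma) gives `c` vanishing at `u±` and positive
on the rest of `F_u`, hence positive on `P[u]` off the segment `[u⁺, u⁻]`.
-/

open Function Set

section ConvexHull

variable {E : Type*} [AddCommGroup E] [Module ℝ E]

theorem mem_segment_of_mem_convexHull_of_nonpos (f : E →ₗ[ℝ] ℝ) {S : Set E} {x y v : E}
    (hx : f x = 0) (hy : f y = 0) (hS : ∀ s ∈ S, s ≠ x → s ≠ y → 0 < f s)
    (hv : v ∈ convexHull ℝ S) (hfv : f v ≤ 0) : v ∈ segment ℝ x y := by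
  have hsub : S ⊆ {x, y} ∪ S \ {x, y} := by simp
  rcases (S \ {x, y}).eq_empty_or_nonempty with hrest | hrest
  · simpa [hrest, convexHull_pair] using convexHull_mono hsub hv
  have hv' := convexHull_mono hsub hv
  rw [convexHull_union (insert_nonempty x {y}) hrest, convexHull_pair, mem_convexJoin] at hv'
  obtain ⟨p, hp, q, hq, α, β, hα, hβ, hαβ, rfl⟩ := hv'
  have hfp : f p = 0 := (LinearMap.ker f).convex.segment_subset hx hy hp
  have hfq : 0 < f q := by
    refine convexHull_min (fun s hs => ?_) (convex_halfSpace_gt f.isLinear 0) hq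
    simp only [mem_sdiff, mem_insert_iff, mem_singleton_iff, not_or] at hs
    exact hS s hs.1 hs.2.1 hs.2.2
  have hβ0 : β = 0 := by
    simp only [map_add, map_smul, hfp, smul_eq_mul] at hfv
    nlinarith
  obtain rfl : α = 1 := by linarith
  simpa [hβ0] using hp

end ConvexHull

section DotProduct

variable {ι R : Type*} [Fintype ι]

theorem exists_dotProduct_eq_zero_and_pos {S : Set (ι → ℝ)} {r x c : ι → ℝ}
    (hr : ∀ y ∈ S, r ⬝ᵥ y = 1) (hx : x ∈ S) (hc : ∀ y ∈ S, y ≠ x → c ⬝ᵥ x < c ⬝ᵥ y) :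
    ∃ a : ι → ℝ, a ⬝ᵥ x = 0 ∧ ∀ y ∈ S, y ≠ x → 0 < a ⬝ᵥ y :=
  ⟨c - (c ⬝ᵥ x) • r, by simp [sub_dotProduct, hr x hx],
    fun y hy hyx => by simpa [sub_dotProduct, hr y hy] using hc y hy hyx⟩

variable [NonUnitalNonAssocSemiring R] {s : Set ι} {a x : ι → R}

theorem indicator_dotProduct_of_support_subset (h : support x ⊆ s) :
    s.indicator a ⬝ᵥ x = a ⬝ᵥ x := by
  refine Finset.sum_congr rfl fun i _ => ?_
  by_cases hi : i ∈ s
  · rw [indicator_of_mem hi]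
  · rw [notMem_support.mp (mt (@h i) hi), mul_zero, mul_zero]

theorem indicator_dotProduct_of_disjoint (h : Disjoint (support x) s) :
    s.indicator a ⬝ᵥ x = 0 := by
  refine Finset.sum_eq_zero fun i _ => ?_
  by_cases hi : i ∈ s
  · rw [notMem_support.mp (h.notMem_of_mem_right hi), mul_zero]
  · rw [indicator_of_notMem hi, zero_mul]

theorem indicator_add_indicator_dotProduct_of_support_subset {s₁ s₂ : Set ι} {a₁ a₂ : ι → R}
    (hs : Disjoint s₁ s₂) (h : support x ⊆ s₁) :
    (s₁.indicator a₁ + s₂.indicator a₂) ⬝ᵥ x = a₁ ⬝ᵥ x := by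
  rw [add_dotProduct, indicator_dotProduct_of_support_subset h,
    indicator_dotProduct_of_disjoint (hs.mono_left h), add_zero]

end DotProduct

section IntegerVectors

variable {n : ℕ}

theorem support_toR (t : Fin n → ℤ) : support (toR t) = support t := by
  ext i
  simp [toR]

theorem toR_injective : Injective (toR (n := n)) := fun a b h =>
  funext fun i => by simpa [toR] using congrFun h i

theorem toR_dotProduct_toR (a b : Fin n → ℤ) : toR a ⬝ᵥ toR b = ((a ⬝ᵥ b : ℤ) : ℝ) :=
  (RingHom.map_dotProduct (Int.castRingHom ℝ) a b).symm

theorem one_le_indicator_one_dotProduct_toR {s : Set (Fin n)} {t : Fin n → ℤ}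
    (ht : ∀ i, 0 ≤ t i) {i : Fin n} (hi : i ∈ s) (hti : t i ≠ 0) :
    1 ≤ s.indicator 1 ⬝ᵥ toR t := by
  have hterm : ∀ j, 0 ≤ s.indicator (1 : Fin n → ℝ) j * toR t j := fun j =>
    mul_nonneg (indicator_nonneg (fun _ _ => zero_le_one) j) (by simpa [toR] using ht j)
  calc (1 : ℝ) ≤ s.indicator 1 i * toR t i := by
        rw [indicator_of_mem hi, Pi.one_apply, one_mul, toR]
        exact_mod_cast (ht i).lt_of_ne' hti
    _ ≤ s.indicator 1 ⬝ᵥ toR t := Finset.single_le_sum (fun j _ => hterm j) (Finset.mem_univ i)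

theorem vpos_sub_vneg (u : Fin n → ℤ) : vpos u - vneg u = u := by
  funext i
  simp only [Pi.sub_apply, vpos, vneg]
  omega

end IntegerVectors

section Fiber

variable {m n : ℕ} {A : Matrix (Fin m) (Fin n) ℤ} {u w w' w₁ w₂ t : Fin n → ℤ}

theorem vpos_mem_fiber : vpos u ∈ fiber A u := ⟨fun _ => le_max_right _ _, by simp⟩

theorem vneg_mem_fiber (hu : A *ᵥ u = 0) : vneg u ∈ fiber A u :=
  ⟨fun _ => le_max_right _ _, by rwa [vpos_sub_vneg]⟩

theorem mulVec_eq_of_mem_fiber (ht : t ∈ fiber A u) : A *ᵥ t = A *ᵥ vpos u := by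
  have h := ht.2
  rw [mulVec_sub, sub_eq_zero] at h
  exact h.symm

theorem isAntichain_fiber (hpos : ∀ x : Fin n → ℤ, A *ᵥ x = 0 → (∀ i, 0 ≤ x i) → x = 0) :
    IsAntichain (· ≤ ·) (fiber A u) := by
  intro t ht t' ht' hne hle
  refine hne (sub_eq_zero.mp (hpos (t' - t) ?_ fun i => sub_nonneg.mpr (hle i))).symm
  rw [mulVec_sub, mulVec_eq_of_mem_fiber ht, mulVec_eq_of_mem_fiber ht', sub_self]

theorem fiber_finite (hpos : ∀ x : Fin n → ℤ, A *ᵥ x = 0 → (∀ i, 0 ≤ x i) → x = 0) :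
    (fiber A u).Finite := by
  have hpwo : (univ.pi fun _ : Fin n => Ici (0 : ℤ)).IsPWO :=
    IsPWO.pi fun _ => bddBelow_Ici.isWF.isPWO
  exact (isAntichain_fiber hpos).finite_of_partiallyWellOrderedOn
    (hpwo.mono fun t ht i _ => ht.1 i)

theorem exists_dotProduct_toR_eq_one (h0 : 0 ∉ fiber A u) :
    ∃ r : Fin n → ℝ, ∀ t ∈ fiber A u, r ⬝ᵥ toR t = 1 := by
  set w := A *ᵥ vpos u
  have hw : w ≠ 0 := fun hw => h0 ⟨fun _ => le_rfl, by simpa using hw⟩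
  have hκ : ((w ⬝ᵥ w : ℤ) : ℝ) ≠ 0 := by exact_mod_cast mt dotProduct_self_eq_zero.mp hw
  refine ⟨((w ⬝ᵥ w : ℤ) : ℝ)⁻¹ • toR (w ᵥ* A), fun t ht => ?_⟩
  rw [smul_dotProduct, toR_dotProduct_toR, ← dotProduct_mulVec, mulVec_eq_of_mem_fiber ht,
    smul_eq_mul, inv_mul_cancel₀ hκ]

theorem sameComponent.mem_fiber (h : sameComponent A u w t) (hw : w ∈ fiber A u) :
    t ∈ fiber A u := by
  induction h with
  | refl => exact hw
  | tail _ e _ => exact e.2.1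

theorem sameComponent.symm (h : sameComponent A u w t) : sameComponent A u t w := by
  induction h with
  | refl => exact .refl
  | tail _ e ih => exact ih.head ⟨e.2.1, e.1, e.2.2.imp fun _ => And.symm⟩

theorem disjoint_support_of_not_sameComponent (hw : w ∈ fiber A u) (ht : t ∈ fiber A u)
    (h : ¬ sameComponent A u w t) : Disjoint (support w) (support t) :=
  disjoint_left.mpr fun i hwi hti => h (.single ⟨hw, ht, i, hwi, hti⟩)

theorem disjoint_support_of_sameComponent (hw : w ∈ fiber A u) (hw' : w' ∈ fiber A u)
    (hww' : ¬ sameComponent A u w w') (ht : sameComponent A u w t) :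
    Disjoint (support t) (support w') :=
  disjoint_support_of_not_sameComponent (ht.mem_fiber hw) hw' fun h => hww' (ht.trans h)

theorem sameComponent_and_support_subset_of_support_subset_union (h0 : 0 ∉ fiber A u)
    (hw : w ∈ fiber A u) (hw' : w' ∈ fiber A u) (hww' : ¬ sameComponent A u w w')
    (ht : t ∈ fiber A u) (hsupp : support t ⊆ support w ∪ support w') :
    (sameComponent A u w t ∧ support t ⊆ support w) ∨
      (sameComponent A u w' t ∧ support t ⊆ support w') := by
  by_cases h : sameComponent A u w t
  · refine .inl ⟨h, fun i hi => (hsupp hi).resolve_right ?_⟩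
    exact disjoint_left.mp (disjoint_support_of_sameComponent hw hw' hww' h) hi
  by_cases h' : sameComponent A u w' t
  · refine .inr ⟨h', fun i hi => (hsupp hi).resolve_left ?_⟩
    exact disjoint_left.mp
      (disjoint_support_of_sameComponent hw' hw (fun e => hww' e.symm) h') hi
  have hdisj : Disjoint (support t) (support w ∪ support w') :=
    ((disjoint_support_of_not_sameComponent hw ht h).union_left
      (disjoint_support_of_not_sameComponent hw' ht h')).symm
  exact absurd (support_eq_empty_iff.mp (hdisj.eq_bot_of_le hsupp) ▸ ht) h0

theorem zero_notMem_fiber (hpos : ∀ x : Fin n → ℤ, A *ᵥ x = 0 → (∀ i, 0 ≤ x i) → x = 0)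
    (hu : A *ᵥ u = 0) (huM : ¬ sameComponent A u (vpos u) (vneg u)) : 0 ∉ fiber A u := by
  intro h0
  have hP : A *ᵥ vpos u = 0 := by simpa using (mulVec_eq_of_mem_fiber h0).symm
  have hN : A *ᵥ vneg u = 0 := (mulVec_eq_of_mem_fiber (vneg_mem_fiber hu)).trans hP
  rw [hpos _ hP fun _ => le_max_right _ _, hpos _ hN fun _ => le_max_right _ _] at huM
  exact huM .refl

theorem exists_dotProduct_pos_of_not_sameComponent (hfin : (fiber A u).Finite)
    (h0 : 0 ∉ fiber A u) (hw₁ : w₁ ∈ fiber A u) (hw₂ : w₂ ∈ fiber A u)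
    (h : ¬ sameComponent A u w₁ w₂) {a₁ a₂ : Fin n → ℝ} (ha₁ : a₁ ⬝ᵥ toR w₁ = 0)
    (ha₂ : a₂ ⬝ᵥ toR w₂ = 0)
    (ha₁_pos : ∀ t, sameComponent A u w₁ t → t ≠ w₁ → 0 < a₁ ⬝ᵥ toR t)
    (ha₂_pos : ∀ t, sameComponent A u w₂ t → t ≠ w₂ → 0 < a₂ ⬝ᵥ toR t) :
    ∃ c : Fin n → ℝ, c ⬝ᵥ toR w₁ = 0 ∧ c ⬝ᵥ toR w₂ = 0 ∧
      ∀ t ∈ fiber A u, t ≠ w₁ → t ≠ w₂ → 0 < c ⬝ᵥ toR t := by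
  set s₁ := support w₁
  set s₂ := support w₂
  have hs : Disjoint s₁ s₂ := disjoint_support_of_not_sameComponent hw₁ hw₂ h
  set d := s₁.indicator a₁ + s₂.indicator a₂ with hd
  set e := (s₁ ∪ s₂)ᶜ.indicator (1 : Fin n → ℝ)
  obtain ⟨B, hB⟩ := (hfin.image fun t => d ⬝ᵥ toR t).bddBelow
  -- The weight on coordinates outside both supports dominates `d` on the finite fiber.
  set c := d + (|B| + 1) • e
  have hc : ∀ x, support x ⊆ s₁ ∪ s₂ → c ⬝ᵥ x = d ⬝ᵥ x := fun x hx => by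
    rw [add_dotProduct, smul_dotProduct,
      indicator_dotProduct_of_disjoint (disjoint_compl_right.mono_left hx), smul_zero, add_zero]
  have hc₁ : ∀ x, support x ⊆ s₁ → c ⬝ᵥ x = a₁ ⬝ᵥ x := fun x hx => by
    rw [hc x (hx.trans subset_union_left),
      indicator_add_indicator_dotProduct_of_support_subset hs hx]
  have hc₂ : ∀ x, support x ⊆ s₂ → c ⬝ᵥ x = a₂ ⬝ᵥ x := fun x hx => by
    rw [hc x (hx.trans subset_union_right), hd, add_comm,
      indicator_add_indicator_dotProduct_of_support_subset hs.symm hx]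
  refine ⟨c, by rw [hc₁ _ (support_toR w₁).le, ha₁], by rw [hc₂ _ (support_toR w₂).le, ha₂],
    fun t ht ht₁ ht₂ => ?_⟩
  by_cases hsupp : support t ⊆ s₁ ∪ s₂
  · rcases sameComponent_and_support_subset_of_support_subset_union h0 hw₁ hw₂ h ht hsupp with
      ⟨h₁, hsupp₁⟩ | ⟨h₂, hsupp₂⟩
    · rw [hc₁ _ ((support_toR t).trans_subset hsupp₁)]
      exact ha₁_pos t h₁ ht₁
    · rw [hc₂ _ ((support_toR t).trans_subset hsupp₂)]
      exact ha₂_pos t h₂ ht₂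
  · obtain ⟨i, hti, hi⟩ := not_subset.mp hsupp
    have hdB : B ≤ d ⬝ᵥ toR t := hB ⟨t, ht, rfl⟩
    have he : 1 ≤ e ⬝ᵥ toR t := one_le_indicator_one_dotProduct_toR ht.1 hi hti
    rw [add_dotProduct, smul_dotProduct, smul_eq_mul]
    nlinarith [neg_abs_le B, abs_nonneg B]

end Fiber

theorem edge_of_vertices_of_disjoint_markov_polytopes_general {m n : ℕ}
    (A : Matrix (Fin m) (Fin n) ℤ)
    (hpos : ∀ x : Fin n → ℤ, A.mulVec x = 0 → (∀ i, 0 ≤ x i) → x = 0)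
    (u : Fin n → ℤ) (hu : A.mulVec u = 0)
    (huM : ¬ sameComponent A u (vpos u) (vneg u))
    (hv₁ : IsVertexOf (toR '' {t | sameComponent A u (vpos u) t}) (toR (vpos u)))
    (hv₂ : IsVertexOf (toR '' {t | sameComponent A u (vneg u) t}) (toR (vneg u))) :
    ∃ c : Fin n → ℝ,
      (∀ v ∈ segment ℝ (toR (vpos u)) (toR (vneg u)), c ⬝ᵥ v = 0) ∧
      (∀ v ∈ convexHull ℝ (toR '' fiber A u),
        v ∉ segment ℝ (toR (vpos u)) (toR (vneg u)) → 0 < c ⬝ᵥ v) := by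
  have h0 := zero_notMem_fiber hpos hu huM
  obtain ⟨r, hr⟩ := exists_dotProduct_toR_eq_one h0
  have hr_image : ∀ w ∈ fiber A u, ∀ y ∈ toR '' {t | sameComponent A u w t}, r ⬝ᵥ y = 1 := by
    rintro w hw _ ⟨t, ht, rfl⟩
    exact hr t (ht.mem_fiber hw)
  obtain ⟨hP, c₁, hvert₁⟩ := hv₁
  obtain ⟨hN, c₂, hvert₂⟩ := hv₂
  obtain ⟨a₁, ha₁, ha₁_pos⟩ := exists_dotProduct_eq_zero_and_pos (hr_image _ vpos_mem_fiber) hP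
    fun y hy => hvert₁ y (subset_convexHull ℝ _ hy)
  obtain ⟨a₂, ha₂, ha₂_pos⟩ := exists_dotProduct_eq_zero_and_pos
    (hr_image _ (vneg_mem_fiber hu)) hN fun y hy => hvert₂ y (subset_convexHull ℝ _ hy)
  obtain ⟨c, hcP, hcN, hc⟩ := exists_dotProduct_pos_of_not_sameComponent (fiber_finite hpos) h0
    vpos_mem_fiber (vneg_mem_fiber hu) huM ha₁ ha₂
    (fun t ht hne => ha₁_pos _ ⟨t, ht, rfl⟩ (toR_injective.ne hne))
    (fun t ht hne => ha₂_pos _ ⟨t, ht, rfl⟩ (toR_injective.ne hne))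
  set f := dotProductBilin ℝ ℝ c
  refine ⟨c, fun v hv => (LinearMap.ker f).convex.segment_subset hcP hcN hv, fun v hv hvs => ?_⟩
  by_contra hneg
  refine hvs (mem_segment_of_mem_convexHull_of_nonpos f hcP hcN ?_ hv (not_lt.mp hneg))
  rintro _ ⟨t, ht, rfl⟩ ht₁ ht₂
  exact hc t ht (ne_of_apply_ne toR ht₁) (ne_of_apply_ne toR ht₂)

/-- Let `L = ker_ℤ(A)` be positive and `u` in the universal Markov basis (`u⁺`, `u⁻` in
different components of `G_u`).  If `u⁺`, `u⁻` are vertices of the two disjoint Markov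
polytopes `P₁`, `P₂` given by their components, then there is a linear functional `c`
vanishing on the segment `[u⁺,u⁻]` and strictly positive on all other points of
`P[u] = conv(F_u)`; hence `[u⁺,u⁻]` is an edge of `P[u]`. -/
theorem edge_of_vertices_of_disjoint_markov_polytopes {m n : ℕ}
    (A : Matrix (Fin m) (Fin n) ℤ)
    (hpos : ∀ x : Fin n → ℤ, A.mulVec x = 0 → (∀ i, 0 ≤ x i) → x = 0)
    (u : Fin n → ℤ) (hu : A.mulVec u = 0)
    (huM : ¬ sameComponent A u (vpos u) (vneg u))
    (P₁ P₂ : Set (Fin n → ℝ))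
    (hP₁ : P₁ = convexHull ℝ (toR '' {t | sameComponent A u (vpos u) t}))
    (hP₂ : P₂ = convexHull ℝ (toR '' {t | sameComponent A u (vneg u) t}))
    (hdisj : Disjoint P₁ P₂)
    (hv₁ : IsVertexOf (toR '' {t | sameComponent A u (vpos u) t}) (toR (vpos u)))
    (hv₂ : IsVertexOf (toR '' {t | sameComponent A u (vneg u) t}) (toR (vneg u))) :
    ∃ c : Fin n → ℝ,
      (∀ v ∈ segment ℝ (toR (vpos u)) (toR (vneg u)), c ⬝ᵥ v = 0) ∧
      (∀ v ∈ convexHull ℝ (toR '' fiber A u),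
        v ∉ segment ℝ (toR (vpos u)) (toR (vneg u)) → 0 < c ⬝ᵥ v) :=
  edge_of_vertices_of_disjoint_markov_polytopes_general A hpos u hu huM hv₁ hv₂
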